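/- (Achievability, noisy, finite-length bound.) Let q be a prime, n ≥ 1, d ≥ 2, r ≥ 0, m ≥ 1, ε ∈ [0,1], and let T* be a fixed (n;d)-tensor over 𝔽_q of rank at most r. Let M^{(1)},…,M^{(m)} be i.i.d. uniform (n;d)-tensors over 𝔽_q, y = y_{T*}, and ỹ = y + z with q-ary symmetric noise z of error probability ε independent of the M^{(k)}'s. Let τ be an integer with m·ε ≤ τ ≤ m·(q−1)/q, and let E be the event that d_H(y, ỹ) > τ or that some tensor T ≠ T* of rank at most r satisfies d_H(y_T, ỹ) ≤ τ. Then Pr(E) ≤ exp( −2·(τ − m·ε)²/m ) + q^{n·r·d} · exp( −2·( m(q−1)/q − τ )²/m ). -/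

import Mathlib

/-!
Split the error event: either the noise has at least `τ` nonzero entries, or some `T ≠ T*` of
rank at most `r` agrees with `ỹ` in at least `m - τ` positions. The measurements `(M_k, z_k)`
are i.i.d., the number of nonzero noise entries is `Bin(m, ε)`, and for fixed `T` the agreement
`⟨M_k, T - T*⟩ = z_k` has probability exactly `1/q`, since a nonzero linear form of a uniform
tensor is uniform on `𝔽_q` and independent of `z_k`. Both binomial tails are bounded by
Chernoff–Hoeffding (Hoeffding's lemma for a Bernoulli variable, then the optimal exponent), and a
union bound over the at most `q^(n·r·d)` tensors of rank at most `r` finishes the proof.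
-/

open scoped Classical

/-- An `(n;d)`-tensor over `𝔽_q`: a map `[n]^d → 𝔽_q`. -/
abbrev Tensor (q n d : ℕ) := (Fin d → Fin n) → ZMod q

/-- `T` has rank at most `r` if it is a sum of `r` outer products of vectors. -/
def rankLE (q n d r : ℕ) (T : Tensor q n d) : Prop :=
  ∃ u : Fin r → Fin d → (Fin n → ZMod q),
    ∀ idx : Fin d → Fin n, T idx = ∑ i : Fin r, ∏ j : Fin d, u i j (idx j)

/-- The tensor inner product `⟨M, T⟩ = Σ_idx M(idx)·T(idx)`. -/
def tinner {q n d : ℕ} [Fact q.Prime] (M T : Tensor q n d) : ZMod q :=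
  ∑ idx : Fin d → Fin n, M idx * T idx

/-- Probability weight of a noise symbol of the `q`-ary symmetric channel with error
probability `ε`. -/
noncomputable def noiseW (q : ℕ) [Fact q.Prime] (ε : ℝ) (z : ZMod q) : ℝ :=
  if z = 0 then 1 - ε else ε / ((q : ℝ) - 1)

open Finset Real MeasureTheory ProbabilityTheory

theorem one_sub_add_mul_exp_le {p : ℝ} (hp0 : 0 ≤ p) (hp1 : p ≤ 1) (t : ℝ) :
    1 - p + p * exp t ≤ exp (p * t + t ^ 2 / 8) := by
  let μ : Measure ℝ := bernoulliMeasure 1 0 ⟨p, hp0, hp1⟩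
  have hsupp : ∀ᵐ x ∂μ, x ∈ Set.Icc (0 : ℝ) 1 :=
    ae_iff.2 <| bernoulliMeasure_apply_of_notMem_of_notMem _ measurableSet_Icc.compl
      (by simp) (by simp)
  have hmgf := (hasSubgaussianMGF_of_mem_Icc aemeasurable_id hsupp).mgf_le t
  simp only [mgf, μ, integral_bernoulliMeasure, id] at hmgf
  norm_num at hmgf
  have h₁ : exp (p * t) * exp (t * (1 - p)) = exp t := by rw [← exp_add]; ring_nf
  have h₂ : exp (p * t) * exp (-(t * p)) = 1 := by rw [← exp_add]; ring_nf; exact exp_zero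
  calc 1 - p + p * exp t
      = exp (p * t) * (p * exp (t * (1 - p)) + (1 - p) * exp (-(t * p))) := by
        linear_combination (-p) * h₁ - (1 - p) * h₂
    _ ≤ exp (p * t) * exp (1 / 4 * t ^ 2 / 2) := by gcongr
    _ = exp (p * t + t ^ 2 / 8) := by rw [← exp_add]; ring_nf

section Chernoff

variable {Ω : Type*} [Fintype Ω] {w : Ω → ℝ}

theorem sum_prod_card_ge_le_exp_mul (hw0 : ∀ x, 0 ≤ w x) (hw1 : ∑ x, w x = 1)
    (A : Ω → Prop) [DecidablePred A] (m : ℕ) (s : ℝ) {t : ℝ} (ht : 0 ≤ t) :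
    ∑ ω : Fin m → Ω with s ≤ #{k | A (ω k)}, ∏ k, w (ω k)
      ≤ exp (m * ((∑ x with A x, w x) * t + t ^ 2 / 8) - t * s) := by
  set p := ∑ x with A x, w x
  set f : Ω → ℝ := fun x => w x * exp (t * if A x then 1 else 0)
  have hf : ∑ x, f x = 1 - p + p * exp t := by
    have hsplit : ∀ x, f x = w x + (exp t - 1) * if A x then w x else 0 := by
      intro x
      by_cases hx : A x <;> simp [f, hx]
      ring
    simp only [hsplit, sum_add_distrib, ← mul_sum, ← sum_filter, hw1, p]
    ring
  have hf0 : ∀ x, 0 ≤ f x := fun x => mul_nonneg (hw0 x) (exp_pos _).le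
  have hmarkov : ∀ ω : Fin m → Ω, s ≤ #{k | A (ω k)} →
      ∏ k, w (ω k) ≤ (∏ k, f (ω k)) * exp (-(t * s)) := by
    intro ω hω
    have hprod : ∏ k, f (ω k) = (∏ k, w (ω k)) * exp (t * #{k | A (ω k)}) := by
      simp only [f, prod_mul_distrib, ← exp_sum, ← mul_sum, sum_boole]
    rw [hprod, mul_assoc, ← exp_add]
    refine le_mul_of_one_le_right (prod_nonneg fun k _ => hw0 _) (one_le_exp ?_)
    linarith [mul_nonneg ht (sub_nonneg.2 hω)]
  calc ∑ ω : Fin m → Ω with s ≤ #{k | A (ω k)}, ∏ k, w (ω k)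
      ≤ ∑ ω : Fin m → Ω, (∏ k, f (ω k)) * exp (-(t * s)) :=
        (sum_le_sum fun ω hω => hmarkov ω (mem_filter.1 hω).2).trans <|
          sum_le_sum_of_subset_of_nonneg (filter_subset _ _) fun ω _ _ =>
            mul_nonneg (prod_nonneg fun k _ => hf0 (ω k)) (exp_pos _).le
    _ = (1 - p + p * exp t) ^ m * exp (-(t * s)) := by rw [← sum_mul, ← Fintype.sum_pow, hf]
    _ ≤ exp (p * t + t ^ 2 / 8) ^ m * exp (-(t * s)) := by
        have hp0 : 0 ≤ p := sum_nonneg fun x _ => hw0 x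
        have hp1 : p ≤ 1 := hw1 ▸ sum_le_univ_sum_of_nonneg hw0
        gcongr
        exact one_sub_add_mul_exp_le hp0 hp1 t
    _ = exp (m * (p * t + t ^ 2 / 8) - t * s) := by
        rw [← exp_nat_mul, ← exp_add, sub_eq_add_neg]

theorem sum_prod_card_ge_le_exp (hw0 : ∀ x, 0 ≤ w x) (hw1 : ∑ x, w x = 1)
    (A : Ω → Prop) [DecidablePred A] (m : ℕ) {s : ℝ} (hs : m * ∑ x with A x, w x ≤ s) :
    ∑ ω : Fin m → Ω with s ≤ #{k | A (ω k)}, ∏ k, w (ω k)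
      ≤ exp (-2 * (s - m * ∑ x with A x, w x) ^ 2 / m) := by
  -- `t = 4 (s - m p) / m` minimises the exponent; for `m = 0` both sides are `exp 0`.
  refine (sum_prod_card_ge_le_exp_mul hw0 hw1 A m s (t := 4 * (s - m * ∑ x with A x, w x) / m)
    (by have := sub_nonneg.2 hs; positivity)).trans_eq ?_
  rcases eq_or_ne (m : ℝ) 0 with hm | hm
  · simp [hm]
  · congr 1
    field_simp
    ring

end Chernoff

theorem Finset.sum_filter_le_add_sum_sum_filter {α ι : Type*} [Fintype α] {g : α → ℝ}
    (hg : ∀ a, 0 ≤ g a) {P Q : α → Prop} {R : ι → α → Prop} [DecidablePred P]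
    [DecidablePred Q] [∀ i, DecidablePred (R i)] (I : Finset ι)
    (h : ∀ a, P a → Q a ∨ ∃ i ∈ I, R i a) :
    ∑ a with P a, g a ≤ ∑ a with Q a, g a + ∑ i ∈ I, ∑ a with R i a, g a := by
  simp only [sum_filter]
  rw [sum_comm, ← sum_add_distrib]
  refine sum_le_sum fun a _ => ?_
  have hind : ∀ i, 0 ≤ if R i a then g a else 0 := fun i => ite_nonneg (hg a) le_rfl
  have hR : 0 ≤ ∑ i ∈ I, if R i a then g a else 0 := sum_nonneg fun i _ => hind i
  split_ifs with hP hQ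
  · exact le_add_of_nonneg_right hR
  · obtain ⟨i, hi, hRi⟩ := (h a hP).resolve_left hQ
    rw [zero_add]
    exact (if_pos hRi).symm.le.trans (single_le_sum (fun i _ => hind i) hi)
  · exact add_nonneg (hg a) hR
  · rwa [zero_add]

theorem sum_sum_prod_mul_ite_div_card_pow {α β : Type*} [Fintype α] [Fintype β]
    (u : β → ℝ) (m : ℕ) (P : (Fin m → α) → (Fin m → β) → Prop)
    [∀ M z, Decidable (P M z)] :
    (∑ M : Fin m → α, ∑ z : Fin m → β, (∏ k, u (z k)) * if P M z then 1 else 0) /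
        (Fintype.card α : ℝ) ^ m
      = ∑ ω : Fin m → α × β with P (fun k => (ω k).1) (fun k => (ω k).2),
          ∏ k, u (ω k).2 / Fintype.card α := by
  rw [sum_filter, ← (Equiv.arrowProdEquivProdArrow _ _ _).symm.sum_comp,
    Fintype.sum_prod_type, sum_div]
  refine sum_congr rfl fun M _ => ?_
  rw [sum_div]
  refine sum_congr rfl fun z _ => ?_
  simp [Equiv.arrowProdEquivProdArrow, prod_div_distrib, ite_div]

theorem hammingDist_self_add {ι β : Type*} [Fintype ι] [AddGroup β] [DecidableEq β]
    (y z : ι → β) : hammingDist y (fun i => y i + z i) = #{i | z i ≠ 0} := by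
  simp [hammingDist_eq_hammingNorm, hammingNorm]

theorem card_filter_eq_add_hammingDist {ι β : Type*} [Fintype ι] [DecidableEq β]
    (x y : ι → β) : #{i | x i = y i} + hammingDist x y = Fintype.card ι :=
  card_filter_add_card_filter_not _

section Measurements

variable {q n d : ℕ} [Fact q.Prime]

theorem card_filter_rankLE_le (r : ℕ) :
    #{T : Tensor q n d | rankLE q n d r T} ≤ q ^ (n * r * d) := by
  let outerSum : (Fin r → Fin d → Fin n → ZMod q) → Tensor q n d :=
    fun u idx => ∑ i, ∏ j, u i j (idx j)
  have hsub : ({T | rankLE q n d r T} : Finset (Tensor q n d)) ⊆ univ.image outerSum := by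
    intro T hT
    obtain ⟨u, hu⟩ := (mem_filter.1 hT).2
    exact mem_image.2 ⟨u, mem_univ u, funext fun idx => (hu idx).symm⟩
  calc _ ≤ #(univ.image outerSum) := card_le_card hsub
    _ ≤ #(univ : Finset (Fin r → Fin d → Fin n → ZMod q)) := card_image_le
    _ = q ^ (n * r * d) := by
      simp only [card_univ, Fintype.card_fun, ZMod.card, Fintype.card_fin, ← pow_mul]
      ring_nf

theorem tinner_eq_dotProduct (M T : Tensor q n d) : tinner M T = M ⬝ᵥ T := rfl

theorem card_mul_card_filter_tinner_eq {D : Tensor q n d} (hD : D ≠ 0) (b : ZMod q) :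
    q * #{M : Tensor q n d | tinner M D = b} = Fintype.card (Tensor q n d) := by
  obtain ⟨i, hi⟩ := Function.ne_iff.1 hD
  let f : Tensor q n d →+ ZMod q :=
    AddMonoidHom.mk' (fun M => tinner M D) fun M M' => add_dotProduct M M' D
  have hsurj : ∀ c, c ∈ Set.range f := fun c =>
    ⟨Pi.single i (c / D i), by
      simp [f, tinner_eq_dotProduct, single_dotProduct, div_mul_cancel₀ _ hi]⟩
  calc q * #{M | f M = b} = ∑ c, #{M | f M = c} := by
        rw [sum_congr rfl fun c _ => AddMonoidHom.card_fiber_eq_of_mem_range f (hsurj c) (hsurj b),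
          sum_const, card_univ, ZMod.card, smul_eq_mul]
    _ = Fintype.card (Tensor q n d) :=
        (card_eq_sum_card_fiberwise fun _ _ => mem_univ _).symm

theorem noiseW_nonneg {ε : ℝ} (hε0 : 0 ≤ ε) (hε1 : ε ≤ 1) (z : ZMod q) :
    0 ≤ noiseW q ε z := by
  have hq : (1 : ℝ) < q := by exact_mod_cast (Fact.out : q.Prime).one_lt
  unfold noiseW
  split_ifs
  · linarith
  · exact div_nonneg hε0 (by linarith)

theorem sum_filter_ne_zero_noiseW (ε : ℝ) : ∑ z : ZMod q with z ≠ 0, noiseW q ε z = ε := by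
  have hq : (1 : ℝ) < q := by exact_mod_cast (Fact.out : q.Prime).one_lt
  rw [sum_congr rfl (g := fun _ => ε / ((q : ℝ) - 1)) fun z hz => by
      simp [noiseW, (mem_filter.1 hz).2], sum_const, filter_ne',
    card_erase_of_mem (mem_univ _), card_univ, ZMod.card, nsmul_eq_mul,
    Nat.cast_pred (Fact.out : q.Prime).pos]
  field_simp [sub_ne_zero.2 hq.ne']

theorem sum_noiseW (ε : ℝ) : ∑ z, noiseW q ε z = 1 := by
  rw [← sum_filter_not_add_sum_filter univ (· ≠ 0), sum_filter_ne_zero_noiseW]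
  simp [noiseW, filter_eq']

/-- The law of one measurement `(M_k, z_k)`: a uniform sensing tensor and independent noise. -/
noncomputable def measurementWeight (q n d : ℕ) [Fact q.Prime] (ε : ℝ)
    (x : Tensor q n d × ZMod q) : ℝ :=
  noiseW q ε x.2 / Fintype.card (Tensor q n d)

variable {ε : ℝ}

theorem measurementWeight_nonneg (hε0 : 0 ≤ ε) (hε1 : ε ≤ 1) (x : Tensor q n d × ZMod q) :
    0 ≤ measurementWeight q n d ε x :=
  div_nonneg (noiseW_nonneg hε0 hε1 _) (Nat.cast_nonneg _)

theorem sum_filter_measurementWeight_snd (P : ZMod q → Prop) [DecidablePred P] :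
    ∑ x : Tensor q n d × ZMod q with P x.2, measurementWeight q n d ε x
      = ∑ z with P z, noiseW q ε z := by
  have hC : (Fintype.card (Tensor q n d) : ℝ) ≠ 0 := Nat.cast_ne_zero.2 Fintype.card_ne_zero
  calc ∑ x : Tensor q n d × ZMod q with P x.2, measurementWeight q n d ε x
      = ∑ _M : Tensor q n d, (∑ z with P z, noiseW q ε z) / Fintype.card (Tensor q n d) := by
        rw [sum_filter, Fintype.sum_prod_type]
        simp only [measurementWeight, sum_filter, sum_div, ite_div, zero_div]
    _ = ∑ z with P z, noiseW q ε z := by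
        rw [sum_const, card_univ, nsmul_eq_mul, mul_div_cancel₀ _ hC]

theorem sum_measurementWeight :
    ∑ x : Tensor q n d × ZMod q, measurementWeight q n d ε x = 1 := by
  simpa [sum_noiseW] using
    sum_filter_measurementWeight_snd (q := q) (n := n) (d := d) (ε := ε) fun _ => True

theorem sum_filter_tinner_eq_measurementWeight {D : Tensor q n d} (hD : D ≠ 0) :
    ∑ x : Tensor q n d × ZMod q with tinner x.1 D = x.2, measurementWeight q n d ε x
      = 1 / q := by
  have hq : (0 : ℝ) < q := by exact_mod_cast (Fact.out : q.Prime).pos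
  have hfiber (b : ZMod q) :
      (#{M : Tensor q n d | tinner M D = b} : ℝ) / Fintype.card (Tensor q n d) = 1 / q := by
    rw [div_eq_div_iff (Nat.cast_ne_zero.2 Fintype.card_ne_zero) hq.ne', one_mul,
      ← card_mul_card_filter_tinner_eq hD b]
    push_cast
    ring
  calc ∑ x : Tensor q n d × ZMod q with tinner x.1 D = x.2, measurementWeight q n d ε x
      = ∑ z, ∑ M : Tensor q n d with tinner M D = z,
          noiseW q ε z / Fintype.card (Tensor q n d) := by
        rw [sum_filter, Fintype.sum_prod_type_right]
        simp only [measurementWeight, sum_filter]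
    _ = ∑ z, noiseW q ε z * (1 / q) := by
        refine sum_congr rfl fun z _ => ?_
        rw [sum_const, nsmul_eq_mul, ← hfiber z]
        ring
    _ = 1 / q := by rw [← sum_mul, sum_noiseW, one_mul]

theorem sum_prod_card_ne_zero_ge_le_exp (hε0 : 0 ≤ ε) (hε1 : ε ≤ 1) (m : ℕ) {s : ℝ}
    (hs : m * ε ≤ s) :
    ∑ ω : Fin m → Tensor q n d × ZMod q with s ≤ #{k | (ω k).2 ≠ 0},
        ∏ k, measurementWeight q n d ε (ω k)
      ≤ exp (-2 * (s - m * ε) ^ 2 / m) := by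
  have hnoise :
      ∑ x : Tensor q n d × ZMod q with x.2 ≠ 0, measurementWeight q n d ε x = ε := by
    rw [sum_filter_measurementWeight_snd (· ≠ 0), sum_filter_ne_zero_noiseW]
  have hchernoff := sum_prod_card_ge_le_exp (measurementWeight_nonneg hε0 hε1)
    sum_measurementWeight (fun x => x.2 ≠ 0) m (s := s) (by rwa [hnoise])
  rwa [hnoise] at hchernoff

theorem sum_prod_card_tinner_eq_ge_le_exp (hε0 : 0 ≤ ε) (hε1 : ε ≤ 1) {D : Tensor q n d}
    (hD : D ≠ 0) (m : ℕ) {s : ℝ} (hs : s ≤ m * ((q : ℝ) - 1) / q) :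
    ∑ ω : Fin m → Tensor q n d × ZMod q with
        (m : ℝ) - s ≤ #{k | tinner (ω k).1 D = (ω k).2}, ∏ k, measurementWeight q n d ε (ω k)
      ≤ exp (-2 * (m * ((q : ℝ) - 1) / q - s) ^ 2 / m) := by
  have hq : (q : ℝ) ≠ 0 := Nat.cast_ne_zero.2 (Fact.out : q.Prime).ne_zero
  have hagree := sum_filter_tinner_eq_measurementWeight (ε := ε) hD
  have hmean : (m : ℝ) * ((q : ℝ) - 1) / q = m - m * (1 / q) := by field_simp
  have hchernoff := sum_prod_card_ge_le_exp (measurementWeight_nonneg hε0 hε1)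
    sum_measurementWeight _ m (s := m - s) (by rw [hagree]; linarith)
  rw [hagree, sub_sub, add_comm s, ← sub_sub, ← hmean] at hchernoff
  exact hchernoff

theorem le_card_ne_zero_or_exists_le_card_tinner_eq {m r τ : ℕ} {Tstar : Tensor q n d}
    {M : Fin m → Tensor q n d} {z : Fin m → ZMod q}
    (h : τ < hammingDist (fun k => tinner (M k) Tstar) (fun k => tinner (M k) Tstar + z k) ∨
      ∃ T : Tensor q n d, T ≠ Tstar ∧ rankLE q n d r T ∧
        hammingDist (fun k => tinner (M k) T) (fun k => tinner (M k) Tstar + z k) ≤ τ) :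
    (τ : ℝ) ≤ #{k | z k ≠ 0} ∨
      ∃ T ∈ ({T | T ≠ Tstar ∧ rankLE q n d r T} : Finset (Tensor q n d)),
        (m : ℝ) - τ ≤ #{k | tinner (M k) (T - Tstar) = z k} := by
  rcases h with hnoise | ⟨T, hne, hrank, hdist⟩
  · left
    rw [hammingDist_self_add] at hnoise
    exact_mod_cast hnoise.le
  · right
    refine ⟨T, mem_filter.2 ⟨mem_univ _, hne, hrank⟩, ?_⟩
    have hagree : #{k | tinner (M k) (T - Tstar) = z k}
        = #{k | tinner (M k) T = tinner (M k) Tstar + z k} := by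
      congr 1
      exact filter_congr fun k _ => by
        rw [tinner_eq_dotProduct, tinner_eq_dotProduct, tinner_eq_dotProduct, dotProduct_sub,
          sub_eq_iff_eq_add']
    have hsplit := card_filter_eq_add_hammingDist (fun k => tinner (M k) T)
      (fun k => tinner (M k) Tstar + z k)
    rw [Fintype.card_fin, ← hagree] at hsplit
    have hsplit' := congrArg (Nat.cast (R := ℝ)) hsplit
    push_cast at hsplit'
    linarith [(Nat.cast_le (α := ℝ)).2 hdist]

end Measurements

theorem prob_error_noisy_le_general (q n d r m : ℕ) [Fact q.Prime]
    (ε : ℝ) (hε0 : 0 ≤ ε) (hε1 : ε ≤ 1)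
    (Tstar : Tensor q n d)
    (τ : ℕ) (hτ1 : m * ε ≤ (τ : ℝ)) (hτ2 : (τ : ℝ) ≤ m * ((q : ℝ) - 1) / q) :
    (∑ M : Fin m → Tensor q n d, ∑ z : Fin m → ZMod q,
        (∏ k, noiseW q ε (z k)) *
          (if (τ < hammingDist (fun k => tinner (M k) Tstar)
                  (fun k => tinner (M k) Tstar + z k) ∨
                ∃ T : Tensor q n d, T ≠ Tstar ∧ rankLE q n d r T ∧
                  hammingDist (fun k => tinner (M k) T)
                    (fun k => tinner (M k) Tstar + z k) ≤ τ)
            then 1 else 0)) /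
        (Fintype.card (Tensor q n d) : ℝ) ^ m
      ≤ Real.exp (-2 * ((τ : ℝ) - m * ε) ^ 2 / m) +
        (q : ℝ) ^ (n * r * d) * Real.exp (-2 * (m * ((q : ℝ) - 1) / q - (τ : ℝ)) ^ 2 / m) := by
  set S : Finset (Tensor q n d) := {T | T ≠ Tstar ∧ rankLE q n d r T}
  rw [sum_sum_prod_mul_ite_div_card_pow]
  calc _ ≤ ∑ ω : Fin m → Tensor q n d × ZMod q with (τ : ℝ) ≤ #{k | (ω k).2 ≠ 0},
            ∏ k, measurementWeight q n d ε (ω k)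
        + ∑ T ∈ S, ∑ ω : Fin m → Tensor q n d × ZMod q with
            (m : ℝ) - τ ≤ #{k | tinner (ω k).1 (T - Tstar) = (ω k).2},
            ∏ k, measurementWeight q n d ε (ω k) :=
        sum_filter_le_add_sum_sum_filter
          (fun ω => prod_nonneg fun k _ => measurementWeight_nonneg hε0 hε1 _) S
          fun ω => le_card_ne_zero_or_exists_le_card_tinner_eq
    _ ≤ exp (-2 * ((τ : ℝ) - m * ε) ^ 2 / m) +
        ∑ _T ∈ S, exp (-2 * (m * ((q : ℝ) - 1) / q - τ) ^ 2 / m) := by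
        gcongr with T hT
        · exact sum_prod_card_ne_zero_ge_le_exp hε0 hε1 m hτ1
        · exact sum_prod_card_tinner_eq_ge_le_exp hε0 hε1
            (sub_ne_zero.2 (mem_filter.1 hT).2.1) m hτ2
    _ ≤ _ := by
        rw [sum_const, nsmul_eq_mul]
        gcongr
        exact_mod_cast (card_le_card (monotone_filter_right _ fun _ _ => And.right)).trans
          (card_filter_rankLE_le r)

/-- **Achievability (noisy, finite-length bound).** For a fixed tensor `T*` of rank at
most `r`, i.i.d. uniform sensing tensors, `q`-ary symmetric noise `z` independent of them
(`ỹ = y_{T*} + z`), and an integer threshold `τ` with `m·ε ≤ τ ≤ m(q−1)/q`, the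
probability of the error event `E` — that `d_H(y_{T*}, ỹ) > τ` or some `T ≠ T*` of rank
at most `r` has `d_H(y_T, ỹ) ≤ τ` — satisfies
`Pr(E) ≤ exp(−2(τ − mε)²/m) + q^(n·r·d)·exp(−2(m(q−1)/q − τ)²/m)`. -/
theorem prob_error_noisy_le (q n d r m : ℕ) [Fact q.Prime]
    (hn : 1 ≤ n) (hd : 2 ≤ d) (hm : 1 ≤ m)
    (ε : ℝ) (hε0 : 0 ≤ ε) (hε1 : ε ≤ 1)
    (Tstar : Tensor q n d) (hTstar : rankLE q n d r Tstar)
    (τ : ℕ) (hτ1 : m * ε ≤ (τ : ℝ)) (hτ2 : (τ : ℝ) ≤ m * ((q : ℝ) - 1) / q) :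
    (∑ M : Fin m → Tensor q n d, ∑ z : Fin m → ZMod q,
        (∏ k, noiseW q ε (z k)) *
          (if (τ < hammingDist (fun k => tinner (M k) Tstar)
                  (fun k => tinner (M k) Tstar + z k) ∨
                ∃ T : Tensor q n d, T ≠ Tstar ∧ rankLE q n d r T ∧
                  hammingDist (fun k => tinner (M k) T)
                    (fun k => tinner (M k) Tstar + z k) ≤ τ)
            then 1 else 0)) /
        (Fintype.card (Tensor q n d) : ℝ) ^ m
      ≤ Real.exp (-2 * ((τ : ℝ) - m * ε) ^ 2 / m) +
        (q : ℝ) ^ (n * r * d) * Real.exp (-2 * (m * ((q : ℝ) - 1) / q - (τ : ℝ)) ^ 2 / m) :=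
  prob_error_noisy_le_general q n d r m ε hε0 hε1 Tstar τ hτ1 hτ2
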